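/- arXiv:1310.6308 — 4 statements merged into one kernel-verified Lean document; each statement's English description precedes it below -/
import Mathlib

section
/- Let a < b be real numbers, q : [a,b] → ℝ, and z ∈ ℂ. Let χ : [a,b] → ℂ be twice differentiable with χ''(x) = (q(x) − z)·χ(x). Let φ : ℂ × [a,b] → ℂ be jointly continuous and such that for every w ∈ ℂ the function x ↦ φ(w,x) is twice differentiable with ∂²_x φ(w,x) = (q(x) − w)·φ(w,x). Let Ω : ℂ → ℂ be differentiable at z and suppose that for every w ∈ ℂ: ∂_xφ(w,a)·χ(a) − φ(w,a)·χ'(a) = Ω(z) and ∂_xφ(w,b)·χ(b) − φ(w,b)·χ'(b) = Ω(w). Then ∫_a^b φ(z,x)·χ(x) dx = −Ω'(z). -/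
open MeasureTheory Set

/-!
For `w ≠ z` the Lagrange identity `(W(φ(w), χ))' = (z - w) φ(w) χ` integrates to
`(z - w) ∫_a^b φ(w) χ = W_b - W_a = Ω(w) - Ω(z)`, so `w ↦ -∫_a^b φ(w) χ` is the difference
quotient of `Ω` at `z`. This function is continuous in `w` by joint continuity of `φ`, hence `Ω`
is differentiable at `z` with derivative `-∫_a^b φ(z) χ`.
-/

section Wronskian

variable {𝕜 : Type*} [RCLike 𝕜]

def wronskian (f f' g g' : ℝ → 𝕜) (x : ℝ) : 𝕜 :=
  f' x * g x - f x * g' x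

theorem hasDerivAt_wronskian {f f' g g' : ℝ → 𝕜} {u v : ℝ → 𝕜} {x : ℝ}
    (hf : HasDerivAt f (f' x) x) (hf' : HasDerivAt f' (u x * f x) x)
    (hg : HasDerivAt g (g' x) x) (hg' : HasDerivAt g' (v x * g x) x) :
    HasDerivAt (wronskian f f' g g') ((u x - v x) * (f x * g x)) x :=
  ((hf'.mul hg).sub (hf.mul hg')).congr_deriv (by ring)

theorem mul_integral_eq_wronskian_sub {a b : ℝ} (hab : a ≤ b) {q : ℝ → 𝕜} {w z : 𝕜}
    {f f' g g' : ℝ → 𝕜}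
    (hf : ∀ x ∈ Icc a b, HasDerivAt f (f' x) x)
    (hf' : ∀ x ∈ Icc a b, HasDerivAt f' ((q x - w) * f x) x)
    (hg : ∀ x ∈ Icc a b, HasDerivAt g (g' x) x)
    (hg' : ∀ x ∈ Icc a b, HasDerivAt g' ((q x - z) * g x) x) :
    (z - w) * ∫ x in a..b, f x * g x = wronskian f f' g g' b - wronskian f f' g g' a := by
  have hfg : ContinuousOn (fun x => f x * g x) (uIcc a b) := by
    rw [uIcc_of_le hab]
    exact fun x hx => ((hf x hx).continuousAt.mul (hg x hx).continuousAt).continuousWithinAt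
  rw [← intervalIntegral.integral_const_mul]
  refine intervalIntegral.integral_eq_sub_of_hasDerivAt (fun x hx => ?_)
    (hfg.intervalIntegrable.const_mul _)
  rw [uIcc_of_le hab] at hx
  exact (hasDerivAt_wronskian (u := fun x => q x - w) (v := fun x => q x - z)
    (hf x hx) (hf' x hx) (hg x hx) (hg' x hx)).congr_deriv (by ring)

end Wronskian

theorem continuous_intervalIntegral_of_continuousOn {X E : Type*} [TopologicalSpace X]
    [NormedAddCommGroup E] [NormedSpace ℝ E] {a b : ℝ} (hab : a ≤ b) {f : X → ℝ → E}
    (hf : ContinuousOn (Function.uncurry f) (univ ×ˢ Icc a b)) :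
    Continuous fun x => ∫ t in a..b, f x t := by
  -- Precomposing with the projection onto `[a, b]` extends `f` continuously without changing
  -- the integrals.
  have hext : Continuous fun p : X × ℝ => f p.1 (projIcc a b hab p.2) :=
    hf.comp_continuous (continuous_fst.prodMk (by fun_prop)) fun p => ⟨mem_univ _, Subtype.mem _⟩
  convert intervalIntegral.continuous_parametric_intervalIntegral_of_continuous'
    (f := fun x t => f x (projIcc a b hab t)) (μ := volume) hext a b using 2 with x
  refine intervalIntegral.integral_congr fun t ht => ?_
  rw [uIcc_of_le hab] at ht
  simp only [projIcc_of_mem hab ht]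

theorem hasDerivAt_of_sub_eq_smul {𝕜 E : Type*} [NontriviallyNormedField 𝕜]
    [NormedAddCommGroup E] [NormedSpace 𝕜 E] {f G : 𝕜 → E} {z : 𝕜}
    (hG : ContinuousAt G z) (hf : ∀ w, f w - f z = (w - z) • G w) :
    HasDerivAt f (G z) z := by
  rw [hasDerivAt_iff_tendsto_slope]
  refine hG.continuousWithinAt.tendsto.congr' (eventually_nhdsWithin_of_forall fun w hw => ?_)
  rw [slope_def_module, hf, smul_smul, inv_mul_cancel₀ (sub_ne_zero.mpr hw), one_smul]

theorem integral_eq_neg_deriv_wronskian_general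
    (a b : ℝ) (hab : a < b) (q : ℝ → ℝ) (z : ℂ)
    (χ χ' : ℝ → ℂ)
    (hχ : ∀ x ∈ Set.Icc a b, HasDerivAt χ (χ' x) x)
    (hχ' : ∀ x ∈ Set.Icc a b, HasDerivAt χ' (((q x : ℂ) - z) * χ x) x)
    (φ φx : ℂ → ℝ → ℂ)
    (hφcont : ContinuousOn (fun p : ℂ × ℝ => φ p.1 p.2) (Set.univ ×ˢ Set.Icc a b))
    (hφ : ∀ w : ℂ, ∀ x ∈ Set.Icc a b, HasDerivAt (fun t => φ w t) (φx w x) x)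
    (hφx : ∀ w : ℂ, ∀ x ∈ Set.Icc a b,
      HasDerivAt (fun t => φx w t) (((q x : ℂ) - w) * φ w x) x)
    (Ω : ℂ → ℂ)
    (hWa : ∀ w : ℂ, φx w a * χ a - φ w a * χ' a = Ω z)
    (hWb : ∀ w : ℂ, φx w b * χ b - φ w b * χ' b = Ω w) :
    ∫ x in a..b, φ z x * χ x = -(deriv Ω z) := by
  have hslope : ∀ w, Ω w - Ω z = (w - z) • -∫ x in a..b, φ w x * χ x := fun w => by
    rw [smul_eq_mul, ← hWa w, ← hWb w, mul_neg, ← neg_mul, neg_sub]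
    exact (mul_integral_eq_wronskian_sub hab.le (hφ w) (hφx w) hχ hχ').symm
  have hχcont : ContinuousOn (fun p : ℂ × ℝ => χ p.2) (univ ×ˢ Icc a b) := fun p hp =>
    ((hχ p.2 hp.2).continuousAt.comp continuous_snd.continuousAt).continuousWithinAt
  have hcont : Continuous fun w => -∫ x in a..b, φ w x * χ x :=
    (continuous_intervalIntegral_of_continuousOn hab.le (hφcont.mul hχcont)).neg
  rw [(hasDerivAt_of_sub_eq_smul hcont.continuousAt hslope).deriv, neg_neg]

/-- If `φ(w,·)` is a jointly continuous family of solutions of `−f'' + q f = w f`,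
`χ` is a solution for the parameter `z`, `Ω` is differentiable at `z`, and the boundary
Wronskians satisfy `W_a(φ(w),χ) = Ω(z)` and `W_b(φ(w),χ) = Ω(w)` for all `w`, then
`∫_a^b φ(z,x) χ(x) dx = −Ω'(z)`. -/
theorem integral_eq_neg_deriv_wronskian
    (a b : ℝ) (hab : a < b) (q : ℝ → ℝ) (z : ℂ)
    (χ χ' : ℝ → ℂ)
    (hχ : ∀ x ∈ Set.Icc a b, HasDerivAt χ (χ' x) x)
    (hχ' : ∀ x ∈ Set.Icc a b, HasDerivAt χ' (((q x : ℂ) - z) * χ x) x)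
    (φ φx : ℂ → ℝ → ℂ)
    (hφcont : ContinuousOn (fun p : ℂ × ℝ => φ p.1 p.2) (Set.univ ×ˢ Set.Icc a b))
    (hφ : ∀ w : ℂ, ∀ x ∈ Set.Icc a b, HasDerivAt (fun t => φ w t) (φx w x) x)
    (hφx : ∀ w : ℂ, ∀ x ∈ Set.Icc a b,
      HasDerivAt (fun t => φx w t) (((q x : ℂ) - w) * φ w x) x)
    (Ω : ℂ → ℂ) (hΩ : DifferentiableAt ℂ Ω z)
    (hWa : ∀ w : ℂ, φx w a * χ a - φ w a * χ' a = Ω z)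
    (hWb : ∀ w : ℂ, φx w b * χ b - φ w b * χ' b = Ω w) :
    ∫ x in a..b, φ z x * χ x = -(deriv Ω z) :=
  integral_eq_neg_deriv_wronskian_general a b hab q z χ χ' hχ hχ' φ φx hφcont hφ hφx Ω hWa hWb
end

section
/- Let U ⊆ ℂ be open, w ∈ ℂ, and let A, B : U → ℂ be analytic (complex differentiable) on U. Suppose (w − z)·A(z) = 1 − B(z) for all z ∈ U. Then for every j ∈ ℕ and every z ∈ U: ((w − z)^{j+1} / j!)·A^{(j)}(z) = 1 − Σ_{k=0}^{j} ((w − z)^k / k!)·B^{(k)}(z), where A^{(j)} and B^{(k)} denote the j-th and k-th complex derivatives. -/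
open scoped Nat

/-! Differentiating `(w - z) A = 1 - B` a further `n + 1` times gives
`(w - z) A⁽ⁿ⁺¹⁾ + B⁽ⁿ⁺¹⁾ = (n + 1) A⁽ⁿ⁾` on `U`. Multiplying this by `(w - z)ⁿ⁺¹ / (n + 1)!`
turns the identity for `j = n` into the one for `j = n + 1`, the new summand `k = n + 1` of the
sum coming from the `B⁽ⁿ⁺¹⁾` term. -/

theorem AnalyticOnNhd.iteratedDeriv_of_isOpen {𝕜 : Type*} [NontriviallyNormedField 𝕜]
    {f : 𝕜 → 𝕜} {U : Set 𝕜} (hf : AnalyticOnNhd 𝕜 f U) (hU : IsOpen U) (n : ℕ) :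
    AnalyticOnNhd 𝕜 (iteratedDeriv n f) U := by
  induction n with
  | zero => simpa only [iteratedDeriv_zero] using hf
  | succ n ih => simpa only [iteratedDeriv_succ] using ih.deriv_of_isOpen hU

section

variable {𝕜 : Type*} [NontriviallyNormedField 𝕜] {U : Set 𝕜} {w : 𝕜} {A B : 𝕜 → 𝕜}

theorem HasDerivAt.sub_mul_add {f g : 𝕜 → 𝕜} {f' g' z : 𝕜} (hf : HasDerivAt f f' z)
    (hg : HasDerivAt g g' z) (w : 𝕜) :
    HasDerivAt (fun y => (w - y) * f y + g y) ((w - z) * f' + g' - f z) z :=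
  ((((hasDerivAt_id' z).const_sub w).fun_mul hf).fun_add hg).congr_deriv (by ring)

theorem eqOn_deriv_sub_mul_iteratedDeriv_add (hU : IsOpen U) (hA : AnalyticOnNhd 𝕜 A U)
    (hB : AnalyticOnNhd 𝕜 B U) (n : ℕ) :
    U.EqOn (deriv fun y => (w - y) * iteratedDeriv n A y + iteratedDeriv n B y)
      (fun z => (w - z) * iteratedDeriv (n + 1) A z + iteratedDeriv (n + 1) B z
        - iteratedDeriv n A z) := by
  intro z hz
  simp only [iteratedDeriv_succ]
  exact (HasDerivAt.sub_mul_add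
    (hA.iteratedDeriv_of_isOpen hU n z hz).differentiableAt.hasDerivAt
    (hB.iteratedDeriv_of_isOpen hU n z hz).differentiableAt.hasDerivAt w).deriv

theorem eqOn_sub_mul_iteratedDeriv_succ_add (hU : IsOpen U) (hA : AnalyticOnNhd 𝕜 A U)
    (hB : AnalyticOnNhd 𝕜 B U) (h : ∀ z ∈ U, (w - z) * A z = 1 - B z) (n : ℕ) :
    U.EqOn (fun z => (w - z) * iteratedDeriv (n + 1) A z + iteratedDeriv (n + 1) B z)
      (fun z => (n + 1) * iteratedDeriv n A z) := by
  induction n with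
  | zero =>
    have h₀ : U.EqOn (fun y => (w - y) * iteratedDeriv 0 A y + iteratedDeriv 0 B y) 1 :=
      fun z hz => by simp [h z hz]
    intro z hz
    have hderiv :=
      (eqOn_deriv_sub_mul_iteratedDeriv_add hU hA hB 0 hz).symm.trans (h₀.deriv hU hz)
    simp only [Pi.one_def, deriv_const] at hderiv
    simpa [sub_eq_zero] using hderiv
  | succ n ih =>
    intro z hz
    have hderiv :=
      (eqOn_deriv_sub_mul_iteratedDeriv_add hU hA hB (n + 1) hz).symm.trans (ih.deriv hU hz)
    rw [deriv_const_mul_field', ← iteratedDeriv_succ] at hderiv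
    push_cast
    linear_combination hderiv

end

/-- Inductive differentiation identity: if `(w − z) A(z) = 1 − B(z)` on an open set `U`
with `A`, `B` analytic on `U`, then for all `j` and `z ∈ U`,
`((w − z)^{j+1}/j!) A^{(j)}(z) = 1 − Σ_{k=0}^{j} ((w − z)^k/k!) B^{(k)}(z)`. -/
theorem iterated_deriv_identity
    (U : Set ℂ) (hU : IsOpen U) (w : ℂ) (A B : ℂ → ℂ)
    (hA : DifferentiableOn ℂ A U) (hB : DifferentiableOn ℂ B U)
    (h : ∀ z ∈ U, (w - z) * A z = 1 - B z) :
    ∀ j : ℕ, ∀ z ∈ U,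
      (w - z) ^ (j + 1) / (j ! : ℂ) * iteratedDeriv j A z =
        1 - ∑ k ∈ Finset.range (j + 1),
          (w - z) ^ k / (k ! : ℂ) * iteratedDeriv k B z := by
  have hA' := hA.analyticOnNhd hU
  have hB' := hB.analyticOnNhd hU
  intro j
  induction j with
  | zero => simpa using h
  | succ j ih =>
    intro z hz
    have hstep := eqOn_sub_mul_iteratedDeriv_succ_add hU hA' hB' h j hz
    rw [Finset.sum_range_succ, ← sub_sub, ← ih z hz, Nat.factorial_succ]
    have hj : (j ! : ℂ) ≠ 0 := Nat.cast_ne_zero.2 j.factorial_ne_zero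
    push_cast
    field_simp
    linear_combination (w - z) ^ (j + 1) * hstep
end

section
/- Let a < b be real numbers, q : [a,b] → ℝ, and w ∈ ℂ. Let φ : [a,b] → ℂ be twice differentiable with φ''(x) = (q(x) − w)·φ(x). Let ψ : ℂ × [a,b] → ℂ be such that: (1) ψ and ∂_xψ are jointly continuous on ℂ × [a,b]; (2) for each x ∈ [a,b], the functions z ↦ ψ(z,x) and z ↦ ∂_xψ(z,x) are entire; (3) for each z ∈ ℂ, x ↦ ψ(z,x) is twice differentiable with ∂²_xψ(z,x) = (q(x) − z)·ψ(z,x); (4) for all z ∈ ℂ, φ'(a)·ψ(z,a) − φ(a)·∂_xψ(z,a) = 1. Then for every j ∈ ℕ and every z ∈ ℂ: ((w − z)^{j+1}/j!)·∫_a^b φ(x)·ψ^{(j)}(z,x) dx = 1 − Σ_{k=0}^{j} ((w − z)^k/k!)·(φ'(b)·ψ^{(k)}(z,b) − φ(b)·∂_xψ^{(k)}(z,b)), where ψ^{(k)}(z,x) denotes the k-th complex derivative of z ↦ ψ(z,x). -/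
/-!
For `j = 0` this is the Lagrange identity: the Wronskian `W(φ, ψ(z))` has `x`-derivative
`(z - w) φ ψ(z)`, so `(w - z) I₀(z) + W₀(z) = 1` with `I_k(z) = ∫ φ ψ^{(k)}(z)` and
`W_k(z) = W_b(φ, ψ^{(k)}(z))`. Cauchy's estimates on the unit circle around `z` bound the
`z`-derivatives of `ψ` uniformly in `x`, so the `I_k` may be differentiated under the integral
sign: `I_k' = I_{k+1}`, and likewise `W_k' = W_{k+1}`. Differentiating the `j = 0` identity
repeatedly gives `(w - z) I_{n+1} + W_{n+1} = (n + 1) I_n`, from which the closed formula follows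
by induction on `j`.
-/

open Set Metric MeasureTheory

variable {E : Type*} [NormedAddCommGroup E] [NormedSpace ℂ E] [CompleteSpace E]

theorem Differentiable.hasDerivAt_iteratedDeriv {f : ℂ → E} (hf : Differentiable ℂ f) (n : ℕ)
    (z : ℂ) : HasDerivAt (iteratedDeriv n f) (iteratedDeriv (n + 1) f z) z := by
  rw [iteratedDeriv_succ]
  exact (hf.contDiff.differentiable_iteratedDeriv' n z).hasDerivAt

theorem Differentiable.norm_iteratedDeriv_le_of_forall_mem_sphere_norm_le {f : ℂ → E}
    (hf : Differentiable ℂ f) {c : ℂ} {C : ℝ} (hC : ∀ ξ ∈ sphere c 1, ‖f ξ‖ ≤ C) (n : ℕ) :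
    ‖iteratedDeriv n f c‖ ≤ n.factorial * C := by
  simpa using Complex.norm_iteratedDeriv_le_of_forall_mem_sphere_norm_le n one_pos
    hf.diffContOnCl hC

section Parametric

variable {X : Type*} [TopologicalSpace X] {s : Set X} {f : ℂ → X → E}

theorem continuousOn_iteratedDeriv_parametric
    (hf : ContinuousOn (fun p : ℂ × X => f p.1 p.2) (univ ×ˢ s))
    (hfd : ∀ x ∈ s, Differentiable ℂ (f · x)) (n : ℕ) (z : ℂ) :
    ContinuousOn (fun x => iteratedDeriv n (f · x) z) s := by
  intro x₀ hx₀
  rw [Metric.continuousWithinAt_iff']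
  intro ε hε
  set δ := ε / (2 * n.factorial)
  have hδ : 0 < δ := by positivity
  have hswap : ContinuousOn (Function.uncurry fun x ζ => f ζ x) (s ×ˢ sphere z 1) :=
    hf.comp continuous_swap.continuousOn fun p hp => ⟨mem_univ _, hp.1⟩
  obtain ⟨v, hv, hclose⟩ := (isCompact_sphere z 1).mem_uniformity_of_prod hswap hx₀
    (dist_mem_uniformity hδ)
  filter_upwards [hv, self_mem_nhdsWithin] with x hxv hxs
  have hsub : iteratedDeriv n (f · x) z - iteratedDeriv n (f · x₀) z =
      iteratedDeriv n (fun ζ => f ζ x - f ζ x₀) z :=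
    (iteratedDeriv_sub ((hfd x hxs).contDiff.contDiffAt)
      ((hfd x₀ hx₀).contDiff.contDiffAt)).symm
  rw [dist_eq_norm, hsub]
  calc ‖iteratedDeriv n (fun ζ => f ζ x - f ζ x₀) z‖ ≤ n.factorial * δ :=
        ((hfd x hxs).sub (hfd x₀ hx₀)).norm_iteratedDeriv_le_of_forall_mem_sphere_norm_le
          (fun ξ hξ => le_of_lt (by simpa [dist_eq_norm] using hclose x hxv ξ hξ)) n
    _ < ε := by
        have : (0 : ℝ) < n.factorial := by positivity
        simp only [δ]
        field_simp
        linarith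

theorem exists_bound_iteratedDeriv_parametric (hs : IsCompact s)
    (hf : ContinuousOn (fun p : ℂ × X => f p.1 p.2) (univ ×ˢ s))
    (hfd : ∀ x ∈ s, Differentiable ℂ (f · x)) (n : ℕ) (z : ℂ) :
    ∃ C, ∀ ζ ∈ ball z 1, ∀ x ∈ s, ‖iteratedDeriv n (f · x) ζ‖ ≤ C := by
  obtain ⟨C, hC⟩ := ((isCompact_closedBall z 2).prod hs).exists_bound_of_continuousOn
    (hf.mono (prod_mono (subset_univ _) subset_rfl))
  refine ⟨n.factorial * C, fun ζ hζ x hx =>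
    (hfd x hx).norm_iteratedDeriv_le_of_forall_mem_sphere_norm_le
      (fun ξ hξ => hC (ξ, x) ⟨?_, hx⟩) n⟩
  show dist ξ z ≤ 2
  linarith [dist_triangle ξ ζ z, mem_sphere.mp hξ, mem_ball.mp hζ]

end Parametric

theorem hasDerivAt_integral_iteratedDeriv {a b : ℝ} {f : ℂ → ℝ → E}
    (hf : ContinuousOn (fun p : ℂ × ℝ => f p.1 p.2) (univ ×ˢ uIcc a b))
    (hfd : ∀ x ∈ uIcc a b, Differentiable ℂ (f · x)) (n : ℕ) (z : ℂ) :
    HasDerivAt (fun ζ => ∫ x in a..b, iteratedDeriv n (f · x) ζ)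
      (∫ x in a..b, iteratedDeriv (n + 1) (f · x) z) z := by
  obtain ⟨C, hC⟩ := exists_bound_iteratedDeriv_parametric isCompact_uIcc hf hfd (n + 1) z
  have hcont (k : ℕ) (ζ : ℂ) : ContinuousOn (fun x => iteratedDeriv k (f · x) ζ) (uIcc a b) :=
    continuousOn_iteratedDeriv_parametric hf hfd k ζ
  have hmeas (k : ℕ) (ζ : ℂ) :
      AEStronglyMeasurable (fun x => iteratedDeriv k (f · x) ζ) (volume.restrict (uIoc a b)) :=
    ((hcont k ζ).mono uIoc_subset_uIcc).aestronglyMeasurable measurableSet_uIoc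
  exact (intervalIntegral.hasDerivAt_integral_of_dominated_loc_of_deriv_le
    (bound := fun _ => C) (ball_mem_nhds z one_pos) (.of_forall (hmeas n))
    (hcont n z).intervalIntegrable (hmeas (n + 1) z)
    (ae_of_all _ fun x hx ζ hζ => hC ζ hζ x (uIoc_subset_uIcc hx)) intervalIntegrable_const
    (ae_of_all _ fun x hx ζ _ => (hfd x (uIoc_subset_uIcc hx)).hasDerivAt_iteratedDeriv n ζ)).2

theorem wronskian_sub_eq_mul_integral {a b : ℝ} {q : ℝ → ℂ} {w z : ℂ} {φ φ' u u' : ℝ → ℂ}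
    (hφ : ∀ x ∈ uIcc a b, HasDerivAt φ (φ' x) x)
    (hφ' : ∀ x ∈ uIcc a b, HasDerivAt φ' ((q x - w) * φ x) x)
    (hu : ∀ x ∈ uIcc a b, HasDerivAt u (u' x) x)
    (hu' : ∀ x ∈ uIcc a b, HasDerivAt u' ((q x - z) * u x) x) :
    (φ' b * u b - φ b * u' b) - (φ' a * u a - φ a * u' a) =
      (z - w) * ∫ x in a..b, φ x * u x := by
  have hW (x : ℝ) (hx : x ∈ uIcc a b) :
      HasDerivAt (fun t => φ' t * u t - φ t * u' t) ((z - w) * (φ x * u x)) x := by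
    refine (((hφ' x hx).mul (hu x hx)).sub ((hφ x hx).mul (hu' x hx))).congr_deriv ?_
    ring
  have hcont : ContinuousOn (fun x => φ x * u x) (uIcc a b) := fun x hx =>
    ((hφ x hx).continuousAt.mul (hu x hx).continuousAt).continuousWithinAt
  rw [← intervalIntegral.integral_const_mul, intervalIntegral.integral_eq_sub_of_hasDerivAt hW
    (continuousOn_const.mul hcont).intervalIntegrable]

theorem sub_mul_add_eq_succ_mul_of_hasDerivAt {w : ℂ} {I W : ℕ → ℂ → ℂ}
    (hI : ∀ k ζ, HasDerivAt (I k) (I (k + 1) ζ) ζ) (hW : ∀ k ζ, HasDerivAt (W k) (W (k + 1) ζ) ζ)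
    (h₀ : ∀ ζ, (w - ζ) * I 0 ζ + W 0 ζ = 1) (n : ℕ) (ζ : ℂ) :
    (w - ζ) * I (n + 1) ζ + W (n + 1) ζ = (n + 1) * I n ζ := by
  have hR (k : ℕ) (ζ : ℂ) : HasDerivAt (fun ζ => (w - ζ) * I k ζ + W k ζ)
      ((w - ζ) * I (k + 1) ζ + W (k + 1) ζ - I k ζ) ζ := by
    refine ((((hasDerivAt_id' ζ).const_sub w).mul (hI k ζ)).add (hW k ζ)).congr_deriv ?_
    ring
  have deriv_eq_zero {F : ℂ → ℂ} {F' : ℂ} {ζ : ℂ} (c : ℂ) (hF : ∀ ζ, F ζ = c)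
      (hF' : HasDerivAt F F' ζ) : F' = 0 :=
    hF'.unique (funext hF ▸ hasDerivAt_const ζ c)
  induction n generalizing ζ with
  | zero =>
    have := deriv_eq_zero 1 h₀ (hR 0 ζ)
    push_cast
    linear_combination this
  | succ n ih =>
    have := deriv_eq_zero 0 (fun ζ => sub_eq_zero.mpr (ih ζ))
      ((hR (n + 1) ζ).sub ((hI n ζ).const_mul ((n : ℂ) + 1)))
    push_cast
    linear_combination this

theorem pow_div_factorial_mul_eq_one_sub_sum {w z : ℂ} {I W : ℕ → ℂ}
    (h₀ : (w - z) * I 0 + W 0 = 1)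
    (hrec : ∀ n : ℕ, (w - z) * I (n + 1) + W (n + 1) = (n + 1) * I n) (j : ℕ) :
    (w - z) ^ (j + 1) / j.factorial * I j =
      1 - ∑ k ∈ Finset.range (j + 1), (w - z) ^ k / k.factorial * W k := by
  induction j with
  | zero =>
    simp only [zero_add, pow_one, Nat.factorial_zero, Nat.cast_one, div_one, Finset.sum_range_one,
      pow_zero, one_mul]
    linear_combination h₀
  | succ j ih =>
    have hfac : (j.factorial : ℂ) ≠ 0 := Nat.cast_ne_zero.mpr j.factorial_ne_zero
    have hsucc : (j : ℂ) + 1 ≠ 0 := Nat.cast_add_one_ne_zero j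
    rw [Finset.sum_range_succ, ← sub_sub, ← ih, Nat.factorial_succ]
    push_cast
    field_simp
    linear_combination (w - z) ^ (j + 1) * hrec j

theorem weyl_solution_integral_identity_general
    (a b : ℝ) (hab : a < b) (q : ℝ → ℝ) (w : ℂ)
    (φ φ' : ℝ → ℂ)
    (hφ : ∀ x ∈ Set.Icc a b, HasDerivAt φ (φ' x) x)
    (hφ' : ∀ x ∈ Set.Icc a b, HasDerivAt φ' (((q x : ℂ) - w) * φ x) x)
    (ψ ψx : ℂ → ℝ → ℂ)
    (hψcont : ContinuousOn (fun p : ℂ × ℝ => ψ p.1 p.2) (Set.univ ×ˢ Set.Icc a b))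
    (hψent : ∀ x ∈ Set.Icc a b, Differentiable ℂ (fun z => ψ z x))
    (hψxent : ∀ x ∈ Set.Icc a b, Differentiable ℂ (fun z => ψx z x))
    (hψode : ∀ z : ℂ, ∀ x ∈ Set.Icc a b, HasDerivAt (fun t => ψ z t) (ψx z x) x)
    (hψode' : ∀ z : ℂ, ∀ x ∈ Set.Icc a b,
      HasDerivAt (fun t => ψx z t) (((q x : ℂ) - z) * ψ z x) x)
    (hWa : ∀ z : ℂ, φ' a * ψ z a - φ a * ψx z a = 1) :
    ∀ j : ℕ, ∀ z : ℂ,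
      (w - z) ^ (j + 1) / (j.factorial : ℂ) *
          ∫ x in a..b, φ x * iteratedDeriv j (fun ζ => ψ ζ x) z =
        1 - ∑ k ∈ Finset.range (j + 1),
          (w - z) ^ k / (k.factorial : ℂ) *
            (φ' b * iteratedDeriv k (fun ζ => ψ ζ b) z -
              φ b * iteratedDeriv k (fun ζ => ψx ζ b) z) := by
  have hIcc : uIcc a b = Icc a b := uIcc_of_le hab.le
  have hb : b ∈ Icc a b := right_mem_Icc.mpr hab.le
  set I : ℕ → ℂ → ℂ := fun k ζ => ∫ x in a..b, φ x * iteratedDeriv k (fun ζ => ψ ζ x) ζ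
  set W : ℕ → ℂ → ℂ := fun k ζ =>
    φ' b * iteratedDeriv k (fun ζ => ψ ζ b) ζ - φ b * iteratedDeriv k (fun ζ => ψx ζ b) ζ
  have hI (k : ℕ) (ζ : ℂ) : HasDerivAt (I k) (I (k + 1) ζ) ζ := by
    have hφc : ContinuousOn φ (uIcc a b) := fun x hx =>
      (hφ x (hIcc ▸ hx)).continuousAt.continuousWithinAt
    simpa only [iteratedDeriv_const_mul_field] using
      hasDerivAt_integral_iteratedDeriv (f := fun ζ x => φ x * ψ ζ x)
        ((hφc.comp continuousOn_snd fun p hp => hp.2).mul (hIcc ▸ hψcont))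
        (fun x hx => (hψent x (hIcc ▸ hx)).const_mul (φ x)) k ζ
  have hW (k : ℕ) (ζ : ℂ) : HasDerivAt (W k) (W (k + 1) ζ) ζ :=
    (((hψent b hb).hasDerivAt_iteratedDeriv k ζ).const_mul _).sub
      (((hψxent b hb).hasDerivAt_iteratedDeriv k ζ).const_mul _)
  have h₀ (ζ : ℂ) : (w - ζ) * I 0 ζ + W 0 ζ = 1 := by
    have hL := wronskian_sub_eq_mul_integral (q := fun x => (q x : ℂ))
      (hIcc ▸ hφ) (hIcc ▸ hφ') (hIcc ▸ hψode ζ) (hIcc ▸ hψode' ζ)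
    simp only [I, W, iteratedDeriv_zero]
    rw [hWa ζ] at hL
    linear_combination hL
  intro j z
  exact pow_div_factorial_mul_eq_one_sub_sum (I := (I · z)) (W := (W · z)) (h₀ z)
    (fun n => sub_mul_add_eq_succ_mul_of_hasDerivAt hI hW h₀ n z) j

/-- Regular-interval version of Lemma 4.4 (formula eq:mf2): for a solution `φ` of
`−f'' + q f = w f` and an entire family `ψ(z,·)` of solutions of `−f'' + q f = z f`
with `W_a(φ, ψ(z)) = 1`, one has
`((w − z)^{j+1}/j!) ∫_a^b φ ψ^{(j)}(z) = 1 − Σ_{k=0}^j ((w − z)^k/k!) W_b(φ, ψ^{(k)}(z))`,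
where `W_x(u,v) := u'(x) v(x) − u(x) v'(x)` and `ψ^{(k)}` denotes the `k`-th derivative
with respect to the spectral parameter `z`. -/
theorem weyl_solution_integral_identity
    (a b : ℝ) (hab : a < b) (q : ℝ → ℝ) (w : ℂ)
    (φ φ' : ℝ → ℂ)
    (hφ : ∀ x ∈ Set.Icc a b, HasDerivAt φ (φ' x) x)
    (hφ' : ∀ x ∈ Set.Icc a b, HasDerivAt φ' (((q x : ℂ) - w) * φ x) x)
    (ψ ψx : ℂ → ℝ → ℂ)
    (hψcont : ContinuousOn (fun p : ℂ × ℝ => ψ p.1 p.2) (Set.univ ×ˢ Set.Icc a b))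
    (hψxcont : ContinuousOn (fun p : ℂ × ℝ => ψx p.1 p.2) (Set.univ ×ˢ Set.Icc a b))
    (hψent : ∀ x ∈ Set.Icc a b, Differentiable ℂ (fun z => ψ z x))
    (hψxent : ∀ x ∈ Set.Icc a b, Differentiable ℂ (fun z => ψx z x))
    (hψode : ∀ z : ℂ, ∀ x ∈ Set.Icc a b, HasDerivAt (fun t => ψ z t) (ψx z x) x)
    (hψode' : ∀ z : ℂ, ∀ x ∈ Set.Icc a b,
      HasDerivAt (fun t => ψx z t) (((q x : ℂ) - z) * ψ z x) x)
    (hWa : ∀ z : ℂ, φ' a * ψ z a - φ a * ψx z a = 1) :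
    ∀ j : ℕ, ∀ z : ℂ,
      (w - z) ^ (j + 1) / (j.factorial : ℂ) *
          ∫ x in a..b, φ x * iteratedDeriv j (fun ζ => ψ ζ x) z =
        1 - ∑ k ∈ Finset.range (j + 1),
          (w - z) ^ k / (k.factorial : ℂ) *
            (φ' b * iteratedDeriv k (fun ζ => ψ ζ b) z -
              φ b * iteratedDeriv k (fun ζ => ψx ζ b) z) :=
  weyl_solution_integral_identity_general a b hab q w φ φ' hφ hφ' ψ ψx hψcont hψent hψxent hψode
    hψode' hWa
end

section
/- Let a < b be real numbers and q : [a,b] → ℝ. Let φ : ℂ × [a,b] → ℂ satisfy: (1) for each z ∈ ℂ, x ↦ φ(z,x) is twice differentiable with ∂²_xφ(z,x) = (q(x) − z)·φ(z,x); (2) φ(z̄, x) = conj(φ(z,x)) and ∂_xφ(z̄, x) = conj(∂_xφ(z,x)) for all z ∈ ℂ, x ∈ [a,b]; (3) the boundary values φ(z,a) and ∂_xφ(z,a) do not depend on z. Let c, s : [a,b] → ℝ be differentiable with c(b)s'(b) − c'(b)s(b) = 1, and define E(z) := (c(b)·∂_xφ(z,b) − c'(b)·φ(z,b)) + i·(s(b)·∂_xφ(z,b)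 − s'(b)·φ(z,b)). If z ∈ ℂ with Im z > 0 and the function x ↦ φ(z,x) is not identically zero on [a,b], then |E(z)| > |E(z̄)|. -/
/-!
For `Im z > 0` the Lagrange identity for `-f'' + q f = z f` gives
`(Im (conj f' · f))' = Im z · |f|²`, so `Im (conj φ'(z,·) · φ(z,·))` increases strictly on `[a,b]`.
It vanishes at `a`, where the initial data are real (being independent of `z` and conjugation
symmetric), and `|E(z)|² − |E(z̄)|²` is `4 W_b(c,s)` times its value at `b`.
-/

open Complex ComplexConjugate Set

theorem hasDerivAt_im_conj_deriv_mul {f f' : ℝ → ℂ} {x Q : ℝ} {z : ℂ}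
    (hf : HasDerivAt f (f' x) x) (hf' : HasDerivAt f' ((Q - z) * f x) x) :
    HasDerivAt (fun t => (conj (f' t) * f t).im) (z.im * normSq (f x)) x := by
  have hprod := imCLM.hasFDerivAt.comp_hasDerivAt x (hf'.star.mul hf)
  refine hprod.congr_deriv ?_
  simp only [imCLM_apply, add_im, mul_im, star_def, map_mul, map_sub, conj_ofReal, conj_re, mul_re,
    conj_im, sub_re, sub_im, ofReal_re, ofReal_im, normSq_apply]
  ring

theorem im_conj_deriv_mul_lt {f f' : ℝ → ℂ} {q : ℝ → ℝ} {z : ℂ} {a b : ℝ}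
    (hab : a < b) (hz : 0 < z.im)
    (hf : ∀ x ∈ Icc a b, HasDerivAt f (f' x) x)
    (hf' : ∀ x ∈ Icc a b, HasDerivAt f' ((q x - z) * f x) x)
    (hne : ∃ x ∈ Icc a b, f x ≠ 0) :
    (conj (f' a) * f a).im < (conj (f' b) * f b).im := by
  have hcont : ContinuousOn (fun x => z.im * normSq (f x)) (Icc a b) :=
    continuousOn_const.mul <| continuous_normSq.comp_continuousOn
      fun x hx => (hf x hx).continuousAt.continuousWithinAt
  have hFTC : ∫ x in a..b, z.im * normSq (f x) =
      (conj (f' b) * f b).im - (conj (f' a) * f a).im := by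
    rw [← uIcc_of_le hab.le] at hf hf' hcont
    exact intervalIntegral.integral_eq_sub_of_hasDerivAt
      (fun x hx => hasDerivAt_im_conj_deriv_mul (hf x hx) (hf' x hx)) hcont.intervalIntegrable
  have hpos : 0 < ∫ x in a..b, z.im * normSq (f x) := by
    obtain ⟨x₀, hx₀, hfx₀⟩ := hne
    exact intervalIntegral.integral_pos hab hcont
      (fun x _ => mul_nonneg hz.le (normSq_nonneg _))
      ⟨x₀, hx₀, mul_pos hz (normSq_pos.mpr hfx₀)⟩
  linarith

theorem normSq_sub_normSq_conj (C C' S S' : ℝ) (U V : ℂ) :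
    normSq ((C * V - C' * U) + I * (S * V - S' * U)) -
      normSq ((C * conj V - C' * conj U) + I * (S * conj V - S' * conj U)) =
    4 * (C * S' - C' * S) * (conj V * U).im := by
  simp only [normSq_apply, add_re, add_im, sub_re, sub_im, mul_re, mul_im, ofReal_re, ofReal_im,
    conj_re, conj_im, I_re, I_im]
  ring

theorem Complex.norm_lt_norm_of_normSq_lt {w z : ℂ} (h : normSq w < normSq z) : ‖w‖ < ‖z‖ := by
  rwa [← sq_lt_sq₀ (norm_nonneg w) (norm_nonneg z), Complex.sq_norm, Complex.sq_norm]

theorem de_branges_hermite_biehler_general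
    (a b : ℝ) (hab : a < b) (q : ℝ → ℝ)
    (φ φx : ℂ → ℝ → ℂ)
    (hφode : ∀ z : ℂ, ∀ x ∈ Set.Icc a b, HasDerivAt (fun t => φ z t) (φx z x) x)
    (hφode' : ∀ z : ℂ, ∀ x ∈ Set.Icc a b,
      HasDerivAt (fun t => φx z t) (((q x : ℂ) - z) * φ z x) x)
    (hconj : ∀ z : ℂ, ∀ x ∈ Set.Icc a b,
      φ (starRingEnd ℂ z) x = starRingEnd ℂ (φ z x) ∧
      φx (starRingEnd ℂ z) x = starRingEnd ℂ (φx z x))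
    (hinit : ∀ z w : ℂ, φ z a = φ w a ∧ φx z a = φx w a)
    (c s : ℝ → ℝ)
    (hcs : c b * deriv s b - deriv c b * s b = 1)
    (E : ℂ → ℂ)
    (hE : ∀ z : ℂ, E z = ((Complex.ofReal (c b)) * φx z b -
        (Complex.ofReal (deriv c b)) * φ z b) +
      Complex.I * ((Complex.ofReal (s b)) * φx z b -
        (Complex.ofReal (deriv s b)) * φ z b)) :
    ∀ z : ℂ, 0 < z.im → ¬ (∀ x ∈ Set.Icc a b, φ z x = 0) →
      ‖E (starRingEnd ℂ z)‖ < ‖E z‖ := by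
  intro z hz hne
  have ha : a ∈ Icc a b := left_mem_Icc.mpr hab.le
  have hb : b ∈ Icc a b := right_mem_Icc.mpr hab.le
  have hreal_a : (conj (φx z a) * φ z a).im = 0 := by
    have hφ_real : conj (φ z a) = φ z a := by rw [← (hconj z a ha).1, (hinit _ z).1]
    have hφx_real : conj (φx z a) = φx z a := by rw [← (hconj z a ha).2, (hinit _ z).2]
    rw [hφx_real, ← conj_eq_iff_im, map_mul, hφ_real, hφx_real]
  have hgrowth := im_conj_deriv_mul_lt hab hz (hφode z) (hφode' z) (by push Not at hne; exact hne)
  have hdiff : normSq (E z) - normSq (E (conj z)) = 4 * (conj (φx z b) * φ z b).im := by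
    rw [hE, hE, (hconj z b hb).1, (hconj z b hb).2, normSq_sub_normSq_conj, hcs, mul_one]
  exact norm_lt_norm_of_normSq_lt (by linarith)

/-- Hermite–Biehler property of `E(z) = W_b(c,φ(z)) + i W_b(s,φ(z))`
(with `W_b(u,v) := u(b) v'(b) − u'(b) v(b)`): if `Im z > 0` and `φ(z,·)` is not
identically zero on `[a,b]`, then `|E(z)| > |E(z̄)|`. -/
theorem de_branges_hermite_biehler
    (a b : ℝ) (hab : a < b) (q : ℝ → ℝ)
    (φ φx : ℂ → ℝ → ℂ)
    (hφode : ∀ z : ℂ, ∀ x ∈ Set.Icc a b, HasDerivAt (fun t => φ z t) (φx z x) x)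
    (hφode' : ∀ z : ℂ, ∀ x ∈ Set.Icc a b,
      HasDerivAt (fun t => φx z t) (((q x : ℂ) - z) * φ z x) x)
    (hconj : ∀ z : ℂ, ∀ x ∈ Set.Icc a b,
      φ (starRingEnd ℂ z) x = starRingEnd ℂ (φ z x) ∧
      φx (starRingEnd ℂ z) x = starRingEnd ℂ (φx z x))
    (hinit : ∀ z w : ℂ, φ z a = φ w a ∧ φx z a = φx w a)
    (c s : ℝ → ℝ)
    (hc : ∀ x ∈ Set.Icc a b, DifferentiableAt ℝ c x)
    (hs : ∀ x ∈ Set.Icc a b, DifferentiableAt ℝ s x)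
    (hcs : c b * deriv s b - deriv c b * s b = 1)
    (E : ℂ → ℂ)
    (hE : ∀ z : ℂ, E z = ((Complex.ofReal (c b)) * φx z b -
        (Complex.ofReal (deriv c b)) * φ z b) +
      Complex.I * ((Complex.ofReal (s b)) * φx z b -
        (Complex.ofReal (deriv s b)) * φ z b)) :
    ∀ z : ℂ, 0 < z.im → ¬ (∀ x ∈ Set.Icc a b, φ z x = 0) →
      ‖E (starRingEnd ℂ z)‖ < ‖E z‖ :=
  de_branges_hermite_biehler_general a b hab q φ φx hφode hφode' hconj hinit c s hcs E hE
end
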